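/- Theorem 3 / Appendix G (characteristic polynomial of the interleaved-LRB transition matrix): for every integer n ≥ 1, all reals ε, p̄, and every real λ, det(Q − λ·I) = (1 − λ) · (λ_1 − λ)^{n−1} · (λ_2 − λ), where λ_1 = 1 − 2(ε + p̄) + 2^{n+1} p̄ ε = 1 − 2B − nC and λ_2 = 1 − (n+2)(ε + p̄) + (n+1)(n+2) 2^n p̄ ε = 1 − (n+2)B. -/

import Mathlib

/-!
The columns of `Q` sum to `1`, so adding all rows of `Q - λI` to row `0` makes that row constant
`1 - λ`; subtracting column `0` from the others then splits off the factor `1 - λ` and leaves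
`(λ₁ - λ) I + (C - B) J` on the last `n` coordinates, `J` the all-ones matrix. Its columns all sum
to `λ₂ - λ`, and the same reduction leaves `(λ₁ - λ) I` on `n - 1` coordinates.
-/

open Matrix Finset

noncomputable section

/-- The (n+1)×(n+1) interleaved-LRB transition matrix with parameters B and C:
Q₀₀ = 1 − nB, Q₀ᵢ = 2B, Qᵢ₀ = B, Qᵢⱼ = C for distinct i, j ≥ 1, and
Qᵢᵢ = 1 − 2B − (n−1)C. -/
def Qil (n : ℕ) (B C : ℝ) : Matrix (Fin (n + 1)) (Fin (n + 1)) ℝ :=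
  Matrix.of fun a b =>
    Fin.cases (motive := fun _ => ℝ)
      (Fin.cases (motive := fun _ => ℝ) (1 - (n : ℝ) * B) (fun _ => 2 * B) b)
      (fun i =>
        Fin.cases (motive := fun _ => ℝ) B
          (fun j => if i = j then 1 - 2 * B - ((n : ℝ) - 1) * C else C) b)
      a

section

variable {R : Type*} [CommRing R]

theorem sum_ite_eq_else_const {k : ℕ} (j : Fin k) (x c : R) :
    ∑ i : Fin k, (if i = j then x else c) = x + (k - 1) * c := by
  have h : ∀ i : Fin k, (if i = j then x else c) = (if i = j then x - c else 0) + c := by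
    intro i; split <;> ring
  simp only [h, sum_add_distrib, sum_ite_eq', mem_univ, ↓reduceIte, sum_const, card_univ,
    Fintype.card_fin, nsmul_eq_mul]
  ring

namespace Matrix

theorem det_eq_mul_det_of_col_sum_eq {k : ℕ} {M : Matrix (Fin (k + 1)) (Fin (k + 1)) R} (s : R)
    (N : Matrix (Fin k) (Fin k) R) (hs : ∀ j, ∑ i, M i j = s)
    (hN : ∀ i j, M i.succ j.succ - M i.succ 0 = N i j) :
    M.det = s * N.det := by
  have hrow : M.det = s * (M.updateRow 0 fun _ => 1).det := by
    have hsum : ∑ i, M i = s • fun _ => 1 :=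
      funext fun j => by simpa using (Finset.sum_apply j _ _).trans (hs j)
    simpa [hsum, det_updateRow_smul] using (det_updateRow_sum M 0 fun _ => 1).symm
  let M' := M.updateRow 0 fun _ => 1
  let N' : Matrix (Fin (k + 1)) (Fin (k + 1)) R :=
    of fun i j => Fin.cases (M' i 0) (fun j => M' i j.succ - M' i 0) j
  have hcol : M'.det = N'.det := by
    rw [← det_transpose, ← det_transpose N']
    refine det_eq_of_forall_row_eq_smul_add_const (Fin.cases 0 fun _ => 1) 0 rfl fun i j => ?_
    cases i using Fin.cases <;> simp [N']
  rw [hrow, hcol, det_succ_row_zero, Fin.sum_univ_succ]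
  simp [N', M', submatrix, hN]
  rfl

theorem det_smul_one_add_const (k : ℕ) (μ t : R) :
    (μ • (1 : Matrix (Fin (k + 1)) (Fin (k + 1)) R) + of fun _ _ => t).det
      = (μ + (k + 1) * t) * μ ^ k := by
  rw [det_eq_mul_det_of_col_sum_eq (μ + (k + 1) * t) (μ • 1), det_smul, det_one, mul_one,
    Fintype.card_fin]
  · intro j
    simp [sum_add_distrib, one_apply]
  · intro i j
    simp [one_apply, Fin.succ_ne_zero]

end Matrix

end

section Qil

variable (n : ℕ) (B C : ℝ)

@[simp] theorem Qil_zero_zero : Qil n B C 0 0 = 1 - n * B := rfl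
@[simp] theorem Qil_zero_succ (j : Fin n) : Qil n B C 0 j.succ = 2 * B := rfl
@[simp] theorem Qil_succ_zero (i : Fin n) : Qil n B C i.succ 0 = B := rfl
@[simp] theorem Qil_succ_succ (i j : Fin n) :
    Qil n B C i.succ j.succ = if i = j then 1 - 2 * B - (n - 1) * C else C := rfl

theorem Qil_col_sum_eq_one (j : Fin (n + 1)) : ∑ i, Qil n B C i j = 1 := by
  cases j using Fin.cases <;> simp [Fin.sum_univ_succ, sum_ite_eq_else_const]

theorem det_Qil_sub_smul_one (m : ℕ) (lam : ℝ) :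
    (Qil (m + 1) B C - lam • (1 : Matrix (Fin (m + 2)) (Fin (m + 2)) ℝ)).det
      = (1 - lam) * ((1 - 2 * B - (m + 1) * C - lam) ^ m * (1 - (m + 3) * B - lam)) := by
  rw [det_eq_mul_det_of_col_sum_eq (1 - lam)
      ((1 - 2 * B - (m + 1) * C - lam) • 1 + of fun _ _ => C - B), det_smul_one_add_const]
  · ring
  · intro j
    simp [sum_sub_distrib, Qil_col_sum_eq_one, one_apply]
  · intro i j
    by_cases h : i = j <;> simp [one_apply, Fin.succ_ne_zero, h]
    ring

end Qil

/-- Theorem 3 / Appendix G (characteristic polynomial of the interleaved-LRB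
transition matrix): with B = ε + p̄ − (n+1)2ⁿp̄ε and C = 2^{n+1}p̄ε,
det(Q − λI) = (1 − λ)(λ₁ − λ)^{n−1}(λ₂ − λ), where
λ₁ = 1 − 2(ε + p̄) + 2^{n+1}p̄ε = 1 − 2B − nC and
λ₂ = 1 − (n+2)(ε + p̄) + (n+1)(n+2)2ⁿp̄ε = 1 − (n+2)B. -/
theorem ilrb_charpoly (n : ℕ) (hn : 1 ≤ n) (ε pbar lam : ℝ) :
    (Qil n (ε + pbar - ((n : ℝ) + 1) * 2 ^ n * pbar * ε) (2 ^ (n + 1) * pbar * ε) -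
          lam • (1 : Matrix (Fin (n + 1)) (Fin (n + 1)) ℝ)).det =
        (1 - lam) * ((1 - 2 * (ε + pbar) + 2 ^ (n + 1) * pbar * ε) - lam) ^ (n - 1) *
          ((1 - ((n : ℝ) + 2) * (ε + pbar) +
              ((n : ℝ) + 1) * ((n : ℝ) + 2) * 2 ^ n * pbar * ε) - lam) ∧
      1 - 2 * (ε + pbar) + 2 ^ (n + 1) * pbar * ε =
        1 - 2 * (ε + pbar - ((n : ℝ) + 1) * 2 ^ n * pbar * ε) -
          (n : ℝ) * (2 ^ (n + 1) * pbar * ε) ∧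
      1 - ((n : ℝ) + 2) * (ε + pbar) +
          ((n : ℝ) + 1) * ((n : ℝ) + 2) * 2 ^ n * pbar * ε =
        1 - ((n : ℝ) + 2) * (ε + pbar - ((n : ℝ) + 1) * 2 ^ n * pbar * ε) := by
  obtain ⟨m, rfl⟩ : ∃ m, n = m + 1 := ⟨n - 1, by omega⟩
  refine ⟨?_, by push_cast; ring, by push_cast; ring⟩
  rw [det_Qil_sub_smul_one, Nat.add_sub_cancel]
  push_cast
  ring
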